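/- For t ∈ (0,π), θ(t) > ψ(t), where θ(t) is the interior angle at E(t) and ψ(t) the interior angle at 0 made by the chord [0, E(t)] with the curve E_{[0,t]}, E(t) = sin t + i·ξ(t), ξ'(t) = sin²t/√(1+sin²t). -/

import Mathlib

/-!
Write `φ = tangentAngle t` and `r = tan (φ / 2)`. Since `θ = φ - ψ`, the claim
`θ > ψ` says `ψ < φ / 2`, and as `E t = sin t + i ξ t` with `sin t > 0` this is `ξ t < r sin t`.
The gap `r sin t - ξ t` vanishes at `0`, and using `ξ' = sin² / √(1 + sin²)` its derivative
simplifies to `2 sin² t / (√(1 + sin² t) (√(1 + sin² t) + cos t)²) > 0` on `(0, π)`.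
-/

open Real

/-- The function ξ, antiderivative of sin²t/√(1+sin²t) vanishing at 0. -/
noncomputable def xi (t : ℝ) : ℝ := ∫ r in (0:ℝ)..t, Real.sin r ^ 2 / Real.sqrt (1 + Real.sin r ^ 2)

/-- The rectangular elastica E(t) = sin t + i ξ(t). -/
noncomputable def E (t : ℝ) : ℂ := Real.sin t + xi t * Complex.I

/-- ψ(t): the interior angle at 0 made by the chord [0, E(t)] with the curve E_{[0,t]}. -/
noncomputable def psi (t : ℝ) : ℝ := Complex.arg (E t)

/-- The direction angle of the tangent of E at parameter t (the turning angle of E on [0,t]). -/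
noncomputable def tangentAngle (t : ℝ) : ℝ := 2 * arccos (Real.cos t / Real.sqrt 2) - π / 2

/-- θ(t): the interior angle at E(t) made by the chord [0, E(t)] with the curve E_{[0,t]}. -/
noncomputable def theta (t : ℝ) : ℝ := tangentAngle t - psi t

noncomputable section

def sqrtOneAddSinSq (t : ℝ) : ℝ := √(1 + sin t ^ 2)

-- `tan (tangentAngle t / 2)`, by the half-angle formula and `tan (tangentAngle t) = ξ'(t) / cos t`.
def halfTangentSlope (t : ℝ) : ℝ :=
  (sqrtOneAddSinSq t - cos t) / (sqrtOneAddSinSq t + cos t)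

def halfAngleDefect (t : ℝ) : ℝ := sin t * halfTangentSlope t - xi t

end

lemma sqrtOneAddSinSq_sq (t : ℝ) : sqrtOneAddSinSq t ^ 2 = 1 + sin t ^ 2 :=
  sq_sqrt (by positivity)

lemma one_le_sqrtOneAddSinSq (t : ℝ) : 1 ≤ sqrtOneAddSinSq t :=
  one_le_sqrt.mpr (by nlinarith [sq_nonneg (sin t)])

lemma sqrtOneAddSinSq_pos (t : ℝ) : 0 < sqrtOneAddSinSq t :=
  one_pos.trans_le (one_le_sqrtOneAddSinSq t)

lemma sqrtOneAddSinSq_add_cos_pos {t : ℝ} (ht : -1 < cos t) : 0 < sqrtOneAddSinSq t + cos t := by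
  linarith [one_le_sqrtOneAddSinSq t]

lemma neg_one_lt_cos_of_mem_Ico {t : ℝ} (ht : t ∈ Set.Ico 0 π) : -1 < cos t := by
  simpa using cos_lt_cos_of_nonneg_of_le_pi ht.1 le_rfl ht.2

lemma halfTangentSlope_nonneg {t : ℝ} (ht : -1 < cos t) : 0 ≤ halfTangentSlope t :=
  div_nonneg (by linarith [one_le_sqrtOneAddSinSq t, cos_le_one t])
    (sqrtOneAddSinSq_add_cos_pos ht).le

lemma sqrt_one_add_halfTangentSlope_sq {t : ℝ} (ht : -1 < cos t) :
    √(1 + halfTangentSlope t ^ 2) = 2 / (sqrtOneAddSinSq t + cos t) := by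
  have hD := sqrtOneAddSinSq_add_cos_pos ht
  rw [← sqrt_sq (by positivity : 0 ≤ 2 / (sqrtOneAddSinSq t + cos t))]
  congr 1
  rw [halfTangentSlope]
  field_simp
  linear_combination 2 * sqrtOneAddSinSq_sq t + 2 * sin_sq_add_cos_sq t

lemma tangentAngle_eq_two_mul_arctan {t : ℝ} (ht : -1 < cos t) :
    tangentAngle t = 2 * arctan (halfTangentSlope t) := by
  have hcos : cos (arctan (halfTangentSlope t) + π / 4) = cos t / √2 := by
    have hD := sqrtOneAddSinSq_add_cos_pos ht
    rw [cos_add, cos_arctan, sin_arctan, cos_pi_div_four, sin_pi_div_four,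
      sqrt_one_add_halfTangentSlope_sq ht, halfTangentSlope]
    field_simp
    linear_combination 2 * cos t * sq_sqrt (zero_le_two : (0 : ℝ) ≤ 2)
  have h0 : 0 ≤ arctan (halfTangentSlope t) := arctan_nonneg.mpr (halfTangentSlope_nonneg ht)
  have hπ := arctan_lt_pi_div_two (halfTangentSlope t)
  rw [tangentAngle, ← hcos, arccos_cos (by linarith [pi_pos]) (by linarith)]
  ring

lemma psi_eq_arctan {t : ℝ} (ht : 0 < sin t) : psi t = arctan (xi t / sin t) := by
  have hre : (E t).re = sin t := by simp [E, -Complex.ofReal_sin]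
  have him : (E t).im = xi t := by simp [E, -Complex.ofReal_sin]
  obtain ⟨h1, h2⟩ := abs_lt.mp (Complex.abs_arg_lt_pi_div_two_iff.mpr (Or.inl (hre ▸ ht)))
  rw [psi, ← arctan_tan h1 h2, Complex.tan_arg, hre, him]

lemma hasDerivAt_xi (t : ℝ) : HasDerivAt xi (sin t ^ 2 / sqrtOneAddSinSq t) t := by
  have hcont : Continuous fun r => sin r ^ 2 / √(1 + sin r ^ 2) :=
    .div (by fun_prop) (by fun_prop) fun r => (sqrt_pos.mpr (by positivity)).ne'
  exact intervalIntegral.integral_hasDerivAt_right (hcont.intervalIntegrable _ _)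
    (hcont.stronglyMeasurableAtFilter _ _) hcont.continuousAt

lemma hasDerivAt_sqrtOneAddSinSq (t : ℝ) :
    HasDerivAt sqrtOneAddSinSq (sin t * cos t / sqrtOneAddSinSq t) t := by
  have hpos : 0 < 1 + sin t ^ 2 := by positivity
  refine ((((hasDerivAt_sin t).pow 2).const_add 1).sqrt hpos.ne').congr_deriv ?_
  simp only [sqrtOneAddSinSq, Pi.pow_apply]
  field_simp
  ring

lemma hasDerivAt_halfTangentSlope {t : ℝ} (ht : -1 < cos t) :
    HasDerivAt halfTangentSlope
      (4 * sin t / (sqrtOneAddSinSq t * (sqrtOneAddSinSq t + cos t) ^ 2)) t := by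
  have hq := hasDerivAt_sqrtOneAddSinSq t
  refine ((hq.sub (hasDerivAt_cos t)).div (hq.add (hasDerivAt_cos t))
    (sqrtOneAddSinSq_add_cos_pos ht).ne').congr_deriv ?_
  have := sqrtOneAddSinSq_pos t
  have := sqrtOneAddSinSq_add_cos_pos ht
  simp only [Pi.add_apply, Pi.sub_apply]
  field_simp
  linear_combination 2 * sin t * sqrtOneAddSinSq_sq t + 2 * sin t * sin_sq_add_cos_sq t

lemma hasDerivAt_halfAngleDefect {t : ℝ} (ht : -1 < cos t) :
    HasDerivAt halfAngleDefect
      (2 * sin t ^ 2 / (sqrtOneAddSinSq t * (sqrtOneAddSinSq t + cos t) ^ 2)) t := by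
  refine (((hasDerivAt_sin t).mul (hasDerivAt_halfTangentSlope ht)).sub
    (hasDerivAt_xi t)).congr_deriv ?_
  have := sqrtOneAddSinSq_pos t
  have := sqrtOneAddSinSq_add_cos_pos ht
  rw [halfTangentSlope]
  field_simp
  linear_combination (cos t * sqrtOneAddSinSq t - sin t ^ 2) * sqrtOneAddSinSq_sq t +
    (-cos t * sqrtOneAddSinSq t - sin t ^ 2) * sin_sq_add_cos_sq t

lemma strictMonoOn_halfAngleDefect : StrictMonoOn halfAngleDefect (Set.Ico 0 π) := by
  refine strictMonoOn_of_deriv_pos (convex_Ico 0 π) (fun x hx =>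
    (hasDerivAt_halfAngleDefect (neg_one_lt_cos_of_mem_Ico hx)).continuousAt.continuousWithinAt)
    fun x hx => ?_
  rw [interior_Ico] at hx
  have hcos := neg_one_lt_cos_of_mem_Ico (Set.Ioo_subset_Ico_self hx)
  have hsin := sin_pos_of_pos_of_lt_pi hx.1 hx.2
  rw [(hasDerivAt_halfAngleDefect hcos).deriv]
  exact div_pos (by positivity)
    (mul_pos (sqrtOneAddSinSq_pos x) (pow_pos (sqrtOneAddSinSq_add_cos_pos hcos) 2))

lemma halfAngleDefect_pos {t : ℝ} (ht : t ∈ Set.Ioo 0 π) : 0 < halfAngleDefect t := by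
  have h0 : halfAngleDefect 0 = 0 := by simp [halfAngleDefect, xi]
  simpa [h0] using strictMonoOn_halfAngleDefect ⟨le_rfl, pi_pos⟩ (Set.Ioo_subset_Ico_self ht) ht.1

theorem stmt_19 (t : ℝ) (ht : t ∈ Set.Ioo 0 π) : theta t > psi t := by
  have hsin : 0 < sin t := sin_pos_of_pos_of_lt_pi ht.1 ht.2
  have hcos : -1 < cos t := neg_one_lt_cos_of_mem_Ico (Set.Ioo_subset_Ico_self ht)
  have hslope : xi t / sin t < halfTangentSlope t := by
    have := halfAngleDefect_pos ht
    rw [halfAngleDefect, sub_pos] at this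
    rwa [div_lt_iff₀ hsin, mul_comm]
  have := arctan_strictMono hslope
  rw [gt_iff_lt, theta, tangentAngle_eq_two_mul_arctan hcos, psi_eq_arctan hsin]
  linarith
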